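/- For odd m, the set of self-dual ternary trees with m internal vertices is in bijection with the set of ordered pairs of ternary trees with a total of (m-1)/2 internal vertices. -/
import Mathlib


/-- Ternary trees: the free algebra on one generator `leaf` with one ternary
operation `node`. -/
inductive TernaryTree : Type
  | leaf : TernaryTree
  | node : TernaryTree → TernaryTree → TernaryTree → TernaryTree
deriving DecidableEq

namespace TernaryTree

/-- Number of internal vertices (applications of the ternary operation). -/
def internal : TernaryTree → ℕ
  | leaf => 0
  | node a b c => internal a + internal b + internal c + 1

/-- The dual of a ternary tree. -/
def dual : TernaryTree → TernaryTree
  | leaf => leaf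
  | node a b c => node (dual c) (dual b) (dual a)

theorem internal_dual (t : TernaryTree) : internal (dual t) = internal t := by
  induction t with
  | leaf => rfl
  | node a b c ha hb hc => simp [dual, internal, ha, hb, hc]; omega

theorem dual_dual (t : TernaryTree) : dual (dual t) = t := by
  induction t with
  | leaf => rfl
  | node a b c ha hb hc => simp [dual, ha, hb, hc]

mutual
/-- Encode an even self-dual tree as an arbitrary tree with half the vertices. -/
def encodeE : TernaryTree → TernaryTree
  | leaf => leaf
  | node a b _ => node a (encodeO b).1 (encodeO b).2
/-- Encode an odd self-dual tree as a pair. -/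
def encodeO : TernaryTree → TernaryTree × TernaryTree
  | leaf => (leaf, leaf)
  | node a b _ => (a, encodeE b)
end

mutual
def decodeE : TernaryTree → TernaryTree
  | leaf => leaf
  | node a p q => node a (decodeO p q) (dual a)
def decodeO : TernaryTree → TernaryTree → TernaryTree
  | p, q => node p (decodeE q) (dual p)
end

theorem decode_dual :
    ∀ t : TernaryTree, dual (decodeE t) = decodeE t ∧
      ∀ p : TernaryTree, dual (decodeO p t) = decodeO p t := by
  intro t
  induction t with
  | leaf =>
    refine ⟨by simp [decodeE, dual], fun p => ?_⟩
    simp [decodeO, decodeE, dual, dual_dual]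
  | node a p q ha hp hq =>
    have hE : dual (decodeE (node a p q)) = decodeE (node a p q) := by
      simp only [decodeE, dual, dual_dual, hq.2 p]
    refine ⟨hE, fun r => ?_⟩
    simp only [decodeO, dual, dual_dual, hE]

theorem decode_internal :
    ∀ t : TernaryTree, internal (decodeE t) = 2 * internal t ∧
      ∀ p : TernaryTree,
        internal (decodeO p t) = 2 * (internal p + internal t) + 1 := by
  intro t
  induction t with
  | leaf =>
    refine ⟨by simp [decodeE, internal], fun p => ?_⟩
    simp [decodeO, decodeE, internal, internal_dual]; omega
  | node a p q ha hp hq =>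
    have hE : internal (decodeE (node a p q)) = 2 * internal (node a p q) := by
      simp only [decodeE, internal, internal_dual, hq.2 p]; omega
    refine ⟨hE, fun r => ?_⟩
    simp only [decodeO, internal, internal_dual, hE]; omega

theorem encode_decode :
    ∀ t : TernaryTree, encodeE (decodeE t) = t ∧
      ∀ p : TernaryTree, encodeO (decodeO p t) = (p, t) := by
  intro t
  induction t with
  | leaf =>
    refine ⟨by simp [decodeE, encodeE], fun p => ?_⟩
    simp [decodeO, decodeE, encodeO, encodeE]
  | node a p q ha hp hq =>
    have hE : encodeE (decodeE (node a p q)) = node a p q := by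
      simp only [decodeE, encodeE, hq.2 p]
    refine ⟨hE, fun r => ?_⟩
    simp only [decodeO, encodeO, hE]

theorem decode_encode :
    ∀ t : TernaryTree, dual t = t →
      (Even (internal t) → decodeE (encodeE t) = t) ∧
      (Odd (internal t) → decodeO (encodeO t).1 (encodeO t).2 = t) := by
  intro t
  induction t with
  | leaf =>
    intro _
    refine ⟨fun _ => by simp [encodeE, decodeE], fun h => ?_⟩
    simp [internal, Nat.odd_iff] at h
  | node a b c ha hb hc =>
    intro hd
    simp only [dual, node.injEq] at hd
    obtain ⟨h1, h2, h3⟩ := hd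
    have hca : c = dual a := h3.symm
    have hbc : internal c = internal a := by rw [hca, internal_dual]
    constructor
    · intro hev
      have hbodd : Odd (internal b) := by
        simp [internal] at hev
        rw [Nat.even_iff] at hev
        rw [Nat.odd_iff]
        omega
      have := (hb h2).2 hbodd
      simp only [encodeE, decodeE, this, ← hca]
    · intro hodd
      have hbev : Even (internal b) := by
        simp [internal] at hodd
        rw [Nat.odd_iff] at hodd
        rw [Nat.even_iff]
        omega
      have := (hb h2).1 hbev
      simp only [encodeO, decodeO, this, ← hca]

end TernaryTree

/-- For odd `m`, self-dual ternary trees with `m` internal vertices are in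
bijection with ordered pairs of ternary trees with `(m-1)/2` total internal
vertices. -/
theorem selfdual_equiv_odd (m : ℕ) (hm : Odd m) :
    Nonempty ({t : TernaryTree // t.dual = t ∧ t.internal = m} ≃
      {p : TernaryTree × TernaryTree // p.1.internal + p.2.internal = (m - 1) / 2}) := by
  open TernaryTree in
  refine ⟨{
    toFun := fun ⟨t, hd, hi⟩ => ⟨encodeO t, ?_⟩
    invFun := fun ⟨⟨p, q⟩, hpq⟩ => ⟨decodeO p q, ?_, ?_⟩
    left_inv := ?_
    right_inv := ?_ }⟩
  · -- internal sum
    have hodd : Odd t.internal := hi ▸ hm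
    have hde := (decode_encode t hd).2 hodd
    have := (decode_internal (encodeO t).2).2 (encodeO t).1
    rw [hde, hi] at this
    obtain ⟨k, hk⟩ := hm
    omega
  · exact (decode_dual q).2 p
  · have := (decode_internal q).2 p
    obtain ⟨k, hk⟩ := hm
    rw [this, hpq]
    omega
  · rintro ⟨t, hd, hi⟩
    have hodd : Odd t.internal := hi ▸ hm
    exact Subtype.ext ((decode_encode t hd).2 hodd)
  · rintro ⟨⟨p, q⟩, hpq⟩
    exact Subtype.ext ((encode_decode q).2 p)
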